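/- For n ≥ 4, let τ send ((r,s),(p,q),(a,b)) to (ra + sã, pb + qb̃), where r² + s² = 1 and p² + q² = 1. Then: (i) if (a,b) ∈ W_{2^{n−1}−1,2} then (ra + sã, pb + qb̃) ∈ W_{2^{n−1}−1,2}; (ii) if (a,b) ∈ X_n then (ra + sã, pb + qb̃) ∈ X_n, i.e. ‖ra + sã‖ = ‖pb + qb̃‖ = 1 and (ra + sã)(pb + qb̃) = 0; (iii) τ defines a free action of the torus T = S¹ × S¹ on W_{2^{n−1}−1,2} and on X_n. -/

import Mathlib

noncomputable section

/-- The Cayley–Dickson algebra `A n` of dimension `2^n` over `ℝ`: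
`A 0 = ℝ` and `A (n+1) = A n × A n`. -/
def CD : ℕ → Type
  | 0 => ℝ
  | n + 1 => CD n × CD n

namespace CD

instance instAddCommGroup : (n : ℕ) → AddCommGroup (CD n)
  | 0 => inferInstanceAs (AddCommGroup ℝ)
  | n + 1 =>
    letI := instAddCommGroup n
    inferInstanceAs (AddCommGroup (CD n × CD n))

instance instModule : (n : ℕ) → Module ℝ (CD n)
  | 0 => inferInstanceAs (Module ℝ ℝ)
  | n + 1 =>
    letI := instAddCommGroup n
    letI := instModule n
    inferInstanceAs (Module ℝ (CD n × CD n))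

/-- Conjugation: `x̄ = x` on `ℝ` and `(x₁,x₂)‾ = (x̄₁, -x₂)`. -/
protected def conj : {n : ℕ} → CD n → CD n
  | 0, x => x
  | _ + 1, x => (CD.conj x.1, -x.2)

/-- Cayley–Dickson multiplication: `(a,b)(x,y) = (ax - ȳb, ya + bx̄)`. -/
protected def mul : {n : ℕ} → CD n → CD n → CD n
  | 0, x, y => (show ℝ from x) * (show ℝ from y)
  | _ + 1, x, y =>
    (CD.mul x.1 y.1 - CD.mul (CD.conj y.2) x.2,
     CD.mul y.2 x.1 + CD.mul x.2 (CD.conj y.1))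

instance instMul (n : ℕ) : Mul (CD n) := ⟨CD.mul⟩

/-- The multiplicative unit `e₀` of `A n`. -/
def e0 : (n : ℕ) → CD n
  | 0 => (1 : ℝ)
  | n + 1 => (e0 n, 0)

/-- The element `ẽ₀ = (0, e₀)` of `A n` (junk value `0` for `n = 0`). -/
def te0 : (n : ℕ) → CD n
  | 0 => 0
  | n + 1 => (0, e0 n)

/-- The "complexification" `α̃ = (-b, a)` of `α = (a,b)` (junk value `0` for `n = 0`);
note `α̃ = α·ẽ₀`. -/
def tilde : {n : ℕ} → CD n → CD n
  | 0, _ => 0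
  | _ + 1, x => (-x.2, x.1)

/-- The standard inner product on `A n ≅ ℝ^{2^n}`. -/
protected def inner : {n : ℕ} → CD n → CD n → ℝ
  | 0, x, y => (show ℝ from x) * (show ℝ from y)
  | _ + 1, x, y => CD.inner x.1 y.1 + CD.inner x.2 y.2

/-- The euclidean norm on `A n`. -/
protected def norm {n : ℕ} (x : CD n) : ℝ := Real.sqrt (CD.inner x x)

/-- `x` is pure if its trace `t(x) = x + x̄` vanishes. -/
def IsPure {n : ℕ} (x : CD n) : Prop := x + CD.conj x = 0

/-- `x = (a,b)` is doubly pure if both `a` and `b` are pure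
(equivalently, both `x` and `x̃` are pure). -/
def IsDoublyPure : {n : ℕ} → CD n → Prop
  | 0, x => x = 0
  | _ + 1, x => IsPure x.1 ∧ IsPure x.2

/-- The associator `(x,y,z) = (xy)z - x(yz)`. -/
def assoc {n : ℕ} (x y z : CD n) : CD n := (x * y) * z - x * (y * z)

/-- The subspace `ℍ_a`: the real span of `{e₀, ã, a, ẽ₀}`. -/
def Ha {n : ℕ} (a : CD n) : Submodule ℝ (CD n) :=
  Submodule.span ℝ {e0 n, tilde a, a, te0 n}

/-- The orthogonal complement `ℍ_a^⊥` of `ℍ_a` in `A n`. -/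
def HaPerp {n : ℕ} (a : CD n) : Set (CD n) :=
  {x | ∀ y ∈ Ha a, CD.inner x y = 0}

/-- The element `ε = (ẽ₀, 0)` of `A (n+1)`. -/
def eps (n : ℕ) : CD (n + 1) := (te0 n, 0)

/-- `α̂ = (b,a)` for `α = (a,b) ∈ A (n+1)`. -/
def hat {n : ℕ} (x : CD (n + 1)) : CD (n + 1) := (x.2, x.1)

/-- The element `(a, b)` of `A (n+1) = A n × A n`. -/
def pair {n : ℕ} (a b : CD n) : CD (n + 1) := (a, b)

end CD

/-- The real Stiefel manifold `V_{2^n-2,2}`: orthonormal pairs of doubly pure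
elements of `A n`. -/
def V2 (n : ℕ) : Set (CD n × CD n) :=
  {p | CD.IsDoublyPure p.1 ∧ CD.IsDoublyPure p.2 ∧
    CD.norm p.1 = 1 ∧ CD.norm p.2 = 1 ∧ CD.inner p.1 p.2 = 0}

/-- The complex Stiefel manifold `W_{2^{n-1}-1,2}` realized as the pairs
`(a,b) ∈ V_{2^n-2,2}` with `b ∈ ℍ_a^⊥`. -/
def W (n : ℕ) : Set (CD n × CD n) := {p ∈ V2 n | p.2 ∈ CD.HaPerp p.1}

/-- The zero set `X_n` of the Hopf construction: pairs of norm-one zero divisors. -/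
def X (n : ℕ) : Set (CD n × CD n) :=
  {p | CD.norm p.1 = 1 ∧ CD.norm p.2 = 1 ∧ p.1 * p.2 = 0}

/-!
Write `x̃ = (-x₂, x₁)` for `x = (x₁, x₂) ∈ A_{n+1}`. Since `x̃` is orthogonal to `x`, has the same
length and satisfies `x̃̃ = -x`, each `x ↦ r x + s x̃` with `r² + s² = 1` is a rotation of the
plane `span {x, x̃}`, and these rotations compose like `S¹`. They preserve norms and double purity
(`⟨x̃, e₀⟩ = -⟨x, ẽ₀⟩`, `⟨x̃, ẽ₀⟩ = ⟨x, e₀⟩`), `ℍ_{ra+sã} ⊆ ℍ_a`, and `ℍ_a^⊥` is stable under `~`;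
this gives the statement for `W`. Pairing `r x + s x̃ = x` with `x` and `x̃` shows that the action
is free.

For `X` the point is the identity `⟨ab, ã⟩ = ‖a‖² ⟨b, ẽ₀⟩`, valid in every `A_{n+1}`, next to
`⟨ab, a⟩ = ‖a‖² ⟨b, e₀⟩`: the factors of a zero product of nonzero elements are doubly pure. For
doubly pure `b` one has `ã b = -(ab)~`, and conjugation turns `ab = 0` into `ba = 0`; together
these give `ã b = a b̃ = ã b̃ = 0`, so `(r a + s ã)(p b + q b̃) = 0` by bilinearity.
-/

namespace CD

variable {n : ℕ}

@[ext] theorem ext {x y : CD (n + 1)} (h₁ : x.1 = y.1) (h₂ : x.2 = y.2) : x = y :=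
  Prod.ext h₁ h₂

section Components

variable (x y : CD (n + 1)) (r : ℝ)

@[simp] theorem fst_add : (x + y).1 = x.1 + y.1 := rfl
@[simp] theorem snd_add : (x + y).2 = x.2 + y.2 := rfl
@[simp] theorem fst_neg : (-x).1 = -x.1 := rfl
@[simp] theorem snd_neg : (-x).2 = -x.2 := rfl
@[simp] theorem fst_zero : (0 : CD (n + 1)).1 = 0 := rfl
@[simp] theorem snd_zero : (0 : CD (n + 1)).2 = 0 := rfl
@[simp] theorem fst_smul : (r • x).1 = r • x.1 := rfl
@[simp] theorem snd_smul : (r • x).2 = r • x.2 := rfl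
@[simp] theorem fst_mul : (x * y).1 = x.1 * y.1 - CD.conj y.2 * x.2 := rfl
@[simp] theorem snd_mul : (x * y).2 = y.2 * x.1 + x.2 * CD.conj y.1 := rfl
@[simp] theorem fst_conj : (CD.conj x).1 = CD.conj x.1 := rfl
@[simp] theorem snd_conj : (CD.conj x).2 = -x.2 := rfl
@[simp] theorem fst_tilde : (tilde x).1 = -x.2 := rfl
@[simp] theorem snd_tilde : (tilde x).2 = x.1 := rfl
@[simp] theorem fst_e0 : (e0 (n + 1)).1 = e0 n := rfl
@[simp] theorem snd_e0 : (e0 (n + 1)).2 = 0 := rfl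
@[simp] theorem fst_te0 : (te0 (n + 1)).1 = 0 := rfl
@[simp] theorem snd_te0 : (te0 (n + 1)).2 = e0 n := rfl

theorem inner_succ : CD.inner x y = CD.inner x.1 y.1 + CD.inner x.2 y.2 := rfl

end Components

@[simp] theorem conj_add (x y : CD n) : CD.conj (x + y) = CD.conj x + CD.conj y := by
  induction n with
  | zero => rfl
  | succ n ih => ext <;> simp [ih, add_comm]

@[simp] theorem conj_smul (r : ℝ) (x : CD n) : CD.conj (r • x) = r • CD.conj x := by
  induction n with
  | zero => rfl
  | succ n ih => ext <;> simp [ih]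

@[simp] theorem conj_conj (x : CD n) : CD.conj (CD.conj x) = x := by
  induction n with
  | zero => rfl
  | succ n ih => ext <;> simp [ih]

@[simp] theorem conj_neg (x : CD n) : CD.conj (-x) = -CD.conj x := by
  simpa using conj_smul (-1) x

@[simp] theorem conj_zero : CD.conj (0 : CD n) = 0 := by
  simpa using conj_smul 0 (0 : CD n)

@[simp] theorem conj_sub (x y : CD n) : CD.conj (x - y) = CD.conj x - CD.conj y := by
  rw [sub_eq_add_neg, conj_add, conj_neg, sub_eq_add_neg]

theorem mul_add_and_add_mul (x y z : CD n) :
    x * (y + z) = x * y + x * z ∧ (y + z) * x = y * x + z * x := by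
  induction n with
  | zero => exact ⟨mul_add (R := ℝ) x y z, add_mul (R := ℝ) y z x⟩
  | succ n ih =>
    constructor <;> ext <;>
      simp only [fst_mul, snd_mul, fst_add, snd_add, conj_add, (ih _ _ _).1, (ih _ _ _).2] <;>
      abel

theorem mul_zero_and_zero_mul (x : CD n) : x * 0 = 0 ∧ 0 * x = 0 := by
  induction n with
  | zero => exact ⟨mul_zero (M₀ := ℝ) x, zero_mul (M₀ := ℝ) x⟩
  | succ n ih => constructor <;> ext <;> simp [(ih _).1, (ih _).2]

-- Scoped, so that `+` and `*` elaborated outside `CD` still go through `instAddCommGroup` and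
-- `instMul` directly.
scoped instance instNonUnitalNonAssocRing (n : ℕ) : NonUnitalNonAssocRing (CD n) :=
  { instAddCommGroup n, instMul n with
    left_distrib := fun x y z => (mul_add_and_add_mul x y z).1
    right_distrib := fun x y z => (mul_add_and_add_mul z x y).2
    zero_mul := fun x => (mul_zero_and_zero_mul x).2
    mul_zero := fun x => (mul_zero_and_zero_mul x).1 }

theorem mul_smul_and_smul_mul (r : ℝ) (x y : CD n) :
    x * (r • y) = r • (x * y) ∧ (r • x) * y = r • (x * y) := by
  induction n with
  | zero => exact ⟨mul_left_comm (G := ℝ) x r y, mul_assoc (G := ℝ) r x y⟩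
  | succ n ih => constructor <;> ext <;> simp [(ih _ _).1, (ih _ _).2, smul_sub]

instance instIsScalarTower (n : ℕ) : IsScalarTower ℝ (CD n) (CD n) :=
  ⟨fun r x y => (mul_smul_and_smul_mul r x y).2⟩

instance instSMulCommClass (n : ℕ) : SMulCommClass ℝ (CD n) (CD n) :=
  ⟨fun r x y => (mul_smul_and_smul_mul r x y).1.symm⟩

theorem inner_comm (x y : CD n) : CD.inner x y = CD.inner y x := by
  induction n with
  | zero => exact mul_comm (G := ℝ) x y
  | succ n ih => rw [inner_succ, inner_succ, ih x.1, ih x.2]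

theorem inner_add_left (x y z : CD n) :
    CD.inner (x + y) z = CD.inner x z + CD.inner y z := by
  induction n with
  | zero => exact add_mul (R := ℝ) x y z
  | succ n ih => simp only [inner_succ, fst_add, snd_add, ih]; ring

theorem inner_smul_left (r : ℝ) (x y : CD n) :
    CD.inner (r • x) y = r * CD.inner x y := by
  induction n with
  | zero => exact mul_assoc (G := ℝ) r x y
  | succ n ih => simp only [inner_succ, fst_smul, snd_smul, ih]; ring

theorem inner_add_right (x y z : CD n) :
    CD.inner x (y + z) = CD.inner x y + CD.inner x z := by
  rw [inner_comm, inner_add_left, inner_comm y, inner_comm z]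

theorem inner_smul_right (r : ℝ) (x y : CD n) :
    CD.inner x (r • y) = r * CD.inner x y := by
  rw [inner_comm, inner_smul_left, inner_comm]

theorem inner_neg_left (x y : CD n) : CD.inner (-x) y = -CD.inner x y := by
  simpa using inner_smul_left (-1) x y

theorem inner_neg_right (x y : CD n) : CD.inner x (-y) = -CD.inner x y := by
  simpa using inner_smul_right (-1) x y

theorem inner_sub_left (x y z : CD n) :
    CD.inner (x - y) z = CD.inner x z - CD.inner y z := by
  rw [sub_eq_add_neg, inner_add_left, inner_neg_left, sub_eq_add_neg]

@[simp] theorem inner_zero_left (x : CD n) : CD.inner 0 x = 0 := by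
  simpa using inner_smul_left 0 x x

@[simp] theorem inner_zero_right (x : CD n) : CD.inner x 0 = 0 := by
  rw [inner_comm, inner_zero_left]

theorem inner_conj_conj (x y : CD n) : CD.inner (CD.conj x) (CD.conj y) = CD.inner x y := by
  induction n with
  | zero => rfl
  | succ n ih =>
    simp only [inner_succ, fst_conj, snd_conj, ih, inner_neg_left, inner_neg_right, neg_neg]

theorem inner_conj_left (x y : CD n) : CD.inner (CD.conj x) y = CD.inner x (CD.conj y) := by
  rw [← inner_conj_conj, conj_conj]

@[simp] theorem conj_e0 : CD.conj (e0 n) = e0 n := by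
  induction n with
  | zero => rfl
  | succ n ih => ext <;> simp [ih]

theorem inner_e0_e0 : CD.inner (e0 n) (e0 n) = 1 := by
  induction n with
  | zero => exact mul_one (M := ℝ) 1
  | succ n ih => simp [inner_succ, ih]

theorem e0_ne_zero : e0 n ≠ 0 := by
  intro h
  simpa [h] using inner_e0_e0 (n := n)

theorem conj_mul (x y : CD n) : CD.conj (x * y) = CD.conj y * CD.conj x := by
  induction n with
  | zero => exact mul_comm (G := ℝ) x y
  | succ n ih => ext <;> simp [ih]

theorem mul_conj_self_and_conj_mul_self (x : CD n) :
    x * CD.conj x = CD.inner x x • e0 n ∧ CD.conj x * x = CD.inner x x • e0 n := by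
  induction n with
  | zero => exact ⟨(mul_one (M := ℝ) _).symm, (mul_one (M := ℝ) _).symm⟩
  | succ n ih =>
    constructor <;> ext <;> simp [ih, inner_succ, add_smul]

theorem mul_conj_self (x : CD n) : x * CD.conj x = CD.inner x x • e0 n :=
  (mul_conj_self_and_conj_mul_self x).1

theorem conj_mul_self (x : CD n) : CD.conj x * x = CD.inner x x • e0 n :=
  (mul_conj_self_and_conj_mul_self x).2

theorem inner_mul_left_and_right (x y z : CD n) :
    CD.inner (x * y) z = CD.inner y (CD.conj x * z) ∧
      CD.inner (x * y) z = CD.inner x (z * CD.conj y) := by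
  induction n with
  | zero =>
    exact (by intros; constructor <;> ring :
      ∀ a b c : ℝ, a * b * c = b * (a * c) ∧ a * b * c = a * (c * b)) x y z
  | succ n ih =>
    obtain ⟨a₁, a₂⟩ := ih x.1 y.1 z.1
    obtain ⟨c₁, c₂⟩ := ih y.2 x.1 z.2
    have b₁ : CD.inner (CD.conj y.2 * x.2) z.1 = CD.inner x.2 (y.2 * z.1) := by
      rw [(ih _ _ _).1, conj_conj]
    have b₂ : CD.inner x.2 (y.2 * z.1) = CD.inner y.2 (x.2 * CD.conj z.1) := by
      rw [inner_comm, (ih _ _ _).2]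
    have d₁ : CD.inner (x.2 * CD.conj y.1) z.2 = CD.inner x.2 (z.2 * y.1) := by
      rw [(ih _ _ _).2, conj_conj]
    have d₂ : CD.inner x.2 (z.2 * y.1) = CD.inner y.1 (CD.conj z.2 * x.2) := by
      rw [inner_comm, (ih _ _ _).1]
    constructor <;>
      simp only [inner_succ, fst_mul, snd_mul, fst_conj, snd_conj, conj_neg, conj_conj,
        mul_neg, neg_mul, sub_neg_eq_add, inner_add_left, inner_add_right, inner_sub_left,
        inner_neg_right] <;>
      linarith

theorem inner_mul_left (x y z : CD n) : CD.inner (x * y) z = CD.inner y (CD.conj x * z) :=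
  (inner_mul_left_and_right x y z).1

theorem inner_mul_right (x y z : CD n) : CD.inner (x * y) z = CD.inner x (z * CD.conj y) :=
  (inner_mul_left_and_right x y z).2

theorem add_conj (x : CD n) : x + CD.conj x = (2 * CD.inner x (e0 n)) • e0 n := by
  induction n with
  | zero => exact (by intro; ring : ∀ a : ℝ, a + a = 2 * (a * 1) * 1) x
  | succ n ih => ext <;> simp [ih, inner_succ]

theorem isPure_iff_conj (x : CD n) : IsPure x ↔ CD.conj x = -x :=
  add_eq_zero_iff_eq_neg'

theorem isPure_iff_inner_e0 (x : CD n) : IsPure x ↔ CD.inner x (e0 n) = 0 := by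
  rw [IsPure, add_conj, smul_eq_zero, mul_eq_zero]
  simp [e0_ne_zero]

theorem isDoublyPure_iff (x : CD (n + 1)) :
    IsDoublyPure x ↔ CD.inner x (e0 (n + 1)) = 0 ∧ CD.inner x (te0 (n + 1)) = 0 := by
  simp [IsDoublyPure, isPure_iff_inner_e0, inner_succ]

section Tilde

variable (x y : CD (n + 1))

@[simp] theorem tilde_zero : tilde (0 : CD (n + 1)) = 0 := by ext <;> simp

@[simp] theorem tilde_add : tilde (x + y) = tilde x + tilde y := by ext <;> simp [add_comm]

@[simp] theorem tilde_smul (r : ℝ) : tilde (r • x) = r • tilde x := by ext <;> simp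

@[simp] theorem tilde_tilde : tilde (tilde x) = -x := by ext <;> simp

@[simp] theorem tilde_e0 : tilde (e0 (n + 1)) = te0 (n + 1) := by ext <;> simp

@[simp] theorem tilde_te0 : tilde (te0 (n + 1)) = -e0 (n + 1) := by ext <;> simp

theorem inner_tilde_tilde : CD.inner (tilde x) (tilde y) = CD.inner x y := by
  simp [inner_succ, inner_neg_left, inner_neg_right, add_comm]

theorem inner_tilde_left : CD.inner (tilde x) y = -CD.inner x (tilde y) := by
  simp [inner_succ, inner_neg_left, inner_comm x.1, inner_comm x.2]

theorem inner_self_tilde : CD.inner x (tilde x) = 0 := by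
  have h := inner_tilde_left x x
  rw [inner_comm] at h
  linarith

theorem inner_tilde_e0 : CD.inner (tilde x) (e0 (n + 1)) = -CD.inner x (te0 (n + 1)) := by
  rw [inner_tilde_left, tilde_e0]

theorem inner_tilde_te0 : CD.inner (tilde x) (te0 (n + 1)) = CD.inner x (e0 (n + 1)) := by
  rw [inner_tilde_left, tilde_te0, inner_neg_right, neg_neg]

theorem IsDoublyPure.tilde {x : CD (n + 1)} (hx : IsDoublyPure x) : IsDoublyPure (tilde x) := by
  rw [isDoublyPure_iff] at hx ⊢
  rw [inner_tilde_e0, inner_tilde_te0, hx.1, hx.2, neg_zero]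
  exact ⟨rfl, rfl⟩

theorem IsDoublyPure.isPure {x : CD (n + 1)} (hx : IsDoublyPure x) : IsPure x :=
  (isPure_iff_inner_e0 x).2 ((isDoublyPure_iff x).1 hx).1

theorem isDoublyPure_smul_add_tilde {x : CD (n + 1)} (hx : IsDoublyPure x) (r s : ℝ) :
    IsDoublyPure (r • x + s • tilde x) := by
  rw [isDoublyPure_iff] at hx ⊢
  simp only [inner_add_left, inner_smul_left, inner_tilde_e0, inner_tilde_te0, hx.1, hx.2]
  simp

theorem inner_smul_add_tilde_self (r s : ℝ) :
    CD.inner (r • x + s • tilde x) (r • x + s • tilde x) = (r ^ 2 + s ^ 2) * CD.inner x x := by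
  simp only [inner_add_left, inner_add_right, inner_smul_left, inner_smul_right,
    inner_tilde_tilde, inner_self_tilde, inner_comm (tilde x) x]
  ring

theorem smul_add_tilde_eq_self {x : CD (n + 1)} (hx : CD.inner x x = 1) {r s : ℝ}
    (h : r • x + s • tilde x = x) : r = 1 ∧ s = 0 := by
  have h₁ := congrArg (CD.inner · x) h
  have h₂ := congrArg (CD.inner · (tilde x)) h
  simp only [inner_add_left, inner_smul_left, inner_tilde_tilde, inner_self_tilde,
    inner_comm (tilde x) x, hx] at h₁ h₂
  constructor <;> linarith

theorem smul_add_tilde_smul_add_tilde (r s r' s' : ℝ) :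
    r' • (r • x + s • tilde x) + s' • tilde (r • x + s • tilde x) =
      (r' * r - s' * s) • x + (r' * s + s' * r) • tilde x := by
  simp only [tilde_add, tilde_smul, tilde_tilde]
  module

end Tilde

theorem conj_mul_of_isPure {x y : CD n} (hx : IsPure x) (hy : IsPure y) :
    CD.conj (x * y) = y * x := by
  rw [conj_mul, (isPure_iff_conj x).1 hx, (isPure_iff_conj y).1 hy, neg_mul_neg]

theorem inner_mul_left_self (a b : CD n) :
    CD.inner (a * b) a = CD.inner a a * CD.inner b (e0 n) := by
  rw [inner_mul_left, conj_mul_self, inner_smul_right]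

theorem inner_mul_right_self (a b : CD n) :
    CD.inner (a * b) b = CD.inner b b * CD.inner a (e0 n) := by
  rw [inner_mul_right, mul_conj_self, inner_smul_right]

theorem inner_mul_tilde_left (a b : CD (n + 1)) :
    CD.inner (a * b) (tilde a) = CD.inner a a * CD.inner b (te0 (n + 1)) := by
  have h₁ : CD.inner (CD.conj b.2 * a.2) a.2 = CD.inner a.2 a.2 * CD.inner b.2 (e0 n) := by
    rw [inner_mul_right, mul_conj_self, inner_smul_right, inner_conj_left, conj_e0]
  have h₂ : CD.inner (a.2 * CD.conj b.1) a.1 = CD.inner (a.1 * b.1) a.2 := by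
    rw [inner_mul_left, inner_conj_left, conj_mul, conj_conj, inner_mul_left]
  simp only [inner_succ, fst_mul, snd_mul, fst_tilde, snd_tilde, snd_te0, fst_te0,
    inner_add_left, inner_sub_left, inner_neg_right, inner_zero_right, inner_mul_right_self, h₁, h₂]
  ring

theorem tilde_mul_of_isDoublyPure (a : CD (n + 1)) {b : CD (n + 1)} (hb : IsDoublyPure b) :
    tilde a * b = -tilde (a * b) := by
  obtain ⟨hb₁, hb₂⟩ := hb
  rw [isPure_iff_conj] at hb₁ hb₂
  ext <;> simp [hb₁, hb₂]
  abel

section ZeroDivisors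

variable {a b : CD (n + 1)}

theorem isPure_left_of_mul_eq_zero (hab : a * b = 0) (hb : CD.inner b b ≠ 0) : IsPure a := by
  have h := inner_mul_right_self a b
  rw [hab, inner_zero_left, eq_comm, mul_eq_zero] at h
  exact (isPure_iff_inner_e0 a).2 (h.resolve_left hb)

theorem isDoublyPure_right_of_mul_eq_zero (hab : a * b = 0) (ha : CD.inner a a ≠ 0) :
    IsDoublyPure b := by
  have h₁ := inner_mul_left_self a b
  have h₂ := inner_mul_tilde_left a b
  rw [hab, inner_zero_left, eq_comm, mul_eq_zero] at h₁ h₂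
  exact (isDoublyPure_iff b).2 ⟨h₁.resolve_left ha, h₂.resolve_left ha⟩

theorem tilde_mul_eq_zero (hab : a * b = 0) (ha : CD.inner a a ≠ 0) : tilde a * b = 0 := by
  rw [tilde_mul_of_isDoublyPure a (isDoublyPure_right_of_mul_eq_zero hab ha), hab, tilde_zero,
    neg_zero]

theorem mul_eq_zero_comm (hab : a * b = 0) (ha : CD.inner a a ≠ 0) (hb : CD.inner b b ≠ 0) :
    b * a = 0 := by
  rw [← conj_mul_of_isPure (isPure_left_of_mul_eq_zero hab hb)
    (isDoublyPure_right_of_mul_eq_zero hab ha).isPure, hab, conj_zero]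

theorem mul_tilde_eq_zero (hab : a * b = 0) (ha : CD.inner a a ≠ 0) (hb : CD.inner b b ≠ 0) :
    a * tilde b = 0 := by
  have hba := mul_eq_zero_comm hab ha hb
  rw [← conj_mul_of_isPure (isDoublyPure_right_of_mul_eq_zero hab ha).tilde.isPure
    (isPure_left_of_mul_eq_zero hab hb), tilde_mul_eq_zero hba hb, conj_zero]

theorem tilde_mul_tilde_eq_zero (hab : a * b = 0) (ha : CD.inner a a ≠ 0)
    (hb : CD.inner b b ≠ 0) : tilde a * tilde b = 0 :=
  tilde_mul_eq_zero (mul_tilde_eq_zero hab ha hb) ha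

theorem smul_add_tilde_mul_smul_add_tilde_eq_zero (hab : a * b = 0) (ha : CD.inner a a ≠ 0)
    (hb : CD.inner b b ≠ 0) (r s p q : ℝ) :
    (r • a + s • tilde a) * (p • b + q • tilde b) = 0 := by
  simp only [mul_add, add_mul, smul_mul_assoc, mul_smul_comm, hab, mul_tilde_eq_zero hab ha hb,
    tilde_mul_eq_zero hab ha, tilde_mul_tilde_eq_zero hab ha hb, smul_zero, add_zero]

end ZeroDivisors

theorem norm_eq_one_iff (x : CD n) : CD.norm x = 1 ↔ CD.inner x x = 1 :=
  Real.sqrt_eq_one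

theorem norm_smul_add_tilde_eq_one {x : CD (n + 1)} (hx : CD.norm x = 1) {r s : ℝ}
    (hrs : r ^ 2 + s ^ 2 = 1) : CD.norm (r • x + s • tilde x) = 1 := by
  rw [CD.norm, inner_smul_add_tilde_self, hrs, one_mul]
  exact hx

section HaPerp

theorem mem_haPerp_iff (a x : CD n) :
    x ∈ HaPerp a ↔ CD.inner x (e0 n) = 0 ∧ CD.inner x (tilde a) = 0 ∧ CD.inner x a = 0 ∧
      CD.inner x (te0 n) = 0 := by
  have gen {y : CD n} (hy : y ∈ ({e0 n, tilde a, a, te0 n} : Set (CD n))) : y ∈ Ha a :=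
    Submodule.subset_span hy
  refine ⟨fun h => ⟨h _ (gen (by simp)), h _ (gen (by simp)), h _ (gen (by simp)),
    h _ (gen (by simp))⟩, fun ⟨h₁, h₂, h₃, h₄⟩ y hy => ?_⟩
  induction hy using Submodule.span_induction with
  | mem z hz => rcases hz with rfl | rfl | rfl | rfl <;> assumption
  | zero => exact inner_zero_right x
  | add u v _ _ hu hv => rw [inner_add_right, hu, hv, add_zero]
  | smul r u _ hu => rw [inner_smul_right, hu, mul_zero]

theorem smul_add_smul_mem_haPerp {a x y : CD n} (hx : x ∈ HaPerp a) (hy : y ∈ HaPerp a)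
    (r s : ℝ) : r • x + s • y ∈ HaPerp a := fun z hz => by
  rw [inner_add_left, inner_smul_left, inner_smul_left, hx z hz, hy z hz, mul_zero, mul_zero,
    add_zero]

theorem tilde_mem_haPerp {a x : CD (n + 1)} (hx : x ∈ HaPerp a) : tilde x ∈ HaPerp a := by
  obtain ⟨h₁, h₂, h₃, h₄⟩ := (mem_haPerp_iff a x).1 hx
  rw [mem_haPerp_iff, inner_tilde_e0, inner_tilde_tilde, inner_tilde_left, inner_tilde_te0]
  simp [h₁, h₂, h₃, h₄]

theorem ha_smul_add_tilde_le (a : CD (n + 1)) (r s : ℝ) : Ha (r • a + s • tilde a) ≤ Ha a := by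
  have ha : a ∈ Ha a := Submodule.subset_span (by simp)
  have hta : tilde a ∈ Ha a := Submodule.subset_span (by simp)
  rw [Ha, Submodule.span_le]
  rintro z (rfl | rfl | rfl | rfl)
  · exact Submodule.subset_span (by simp)
  · simpa using add_mem (Submodule.smul_mem _ r hta) (Submodule.smul_mem _ (-s) ha)
  · exact add_mem (Submodule.smul_mem _ r ha) (Submodule.smul_mem _ s hta)
  · exact Submodule.subset_span (by simp)

theorem haPerp_subset_of_le {a b : CD n} (h : Ha b ≤ Ha a) : HaPerp a ⊆ HaPerp b :=
  fun _ hx y hy => hx y (h hy)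

end HaPerp

variable {a b : CD (n + 1)} {r s p q : ℝ}

theorem smul_add_tilde_mem_W (h : (a, b) ∈ W (n + 1)) (hrs : r ^ 2 + s ^ 2 = 1)
    (hpq : p ^ 2 + q ^ 2 = 1) : (r • a + s • tilde a, p • b + q • tilde b) ∈ W (n + 1) := by
  obtain ⟨⟨ha, hb, hna, hnb, -⟩, hperp⟩ := h
  have hperp' : p • b + q • tilde b ∈ HaPerp (r • a + s • tilde a) :=
    haPerp_subset_of_le (ha_smul_add_tilde_le a r s)
      (smul_add_smul_mem_haPerp hperp (tilde_mem_haPerp hperp) p q)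
  refine ⟨⟨isDoublyPure_smul_add_tilde ha r s, isDoublyPure_smul_add_tilde hb p q,
    norm_smul_add_tilde_eq_one hna hrs, norm_smul_add_tilde_eq_one hnb hpq, ?_⟩, hperp'⟩
  rw [inner_comm]
  exact hperp' _ (Submodule.subset_span (by simp))

theorem smul_add_tilde_mem_X (h : (a, b) ∈ X (n + 1)) (hrs : r ^ 2 + s ^ 2 = 1)
    (hpq : p ^ 2 + q ^ 2 = 1) : (r • a + s • tilde a, p • b + q • tilde b) ∈ X (n + 1) := by
  obtain ⟨hna, hnb, hab⟩ := h
  have ha : CD.inner a a ≠ 0 := by simp [(norm_eq_one_iff a).1 hna]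
  have hb : CD.inner b b ≠ 0 := by simp [(norm_eq_one_iff b).1 hnb]
  exact ⟨norm_smul_add_tilde_eq_one hna hrs, norm_smul_add_tilde_eq_one hnb hpq,
    smul_add_tilde_mul_smul_add_tilde_eq_zero hab ha hb r s p q⟩

end CD

/-- For `n ≥ 4`, `τ((r,s),(p,q),(a,b)) = (ra + sã, pb + qb̃)`
(with `r²+s²=1`, `p²+q²=1`) preserves `W_{2^{n-1}-1,2}` and `X_n`, and defines a
free action of the torus `T = S¹ × S¹` on both: the identity acts trivially, the
action is compatible with the group law of `S¹`, and only the identity has fixed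
points. -/
theorem statement9 (n : ℕ) (hn : 4 ≤ n) :
    (∀ r s p q : ℝ, r ^ 2 + s ^ 2 = 1 → p ^ 2 + q ^ 2 = 1 →
      ∀ a b : CD n, (a, b) ∈ W n →
        (r • a + s • CD.tilde a, p • b + q • CD.tilde b) ∈ W n) ∧
    (∀ r s p q : ℝ, r ^ 2 + s ^ 2 = 1 → p ^ 2 + q ^ 2 = 1 →
      ∀ a b : CD n, (a, b) ∈ X n →
        (r • a + s • CD.tilde a, p • b + q • CD.tilde b) ∈ X n) ∧
    (∀ a b : CD n,
      ((1 : ℝ) • a + (0 : ℝ) • CD.tilde a, (1 : ℝ) • b + (0 : ℝ) • CD.tilde b) = (a, b)) ∧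
    (∀ r s r' s' : ℝ, ∀ a : CD n,
      r' • (r • a + s • CD.tilde a) + s' • CD.tilde (r • a + s • CD.tilde a) =
        (r' * r - s' * s) • a + (r' * s + s' * r) • CD.tilde a) ∧
    (∀ r s p q : ℝ, r ^ 2 + s ^ 2 = 1 → p ^ 2 + q ^ 2 = 1 →
      ∀ a b : CD n, ((a, b) ∈ W n ∨ (a, b) ∈ X n) →
        (r • a + s • CD.tilde a, p • b + q • CD.tilde b) = (a, b) →
        r = 1 ∧ s = 0 ∧ p = 1 ∧ q = 0) := by
  obtain ⟨m, rfl⟩ : ∃ m, n = m + 1 := ⟨n - 1, by omega⟩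
  refine ⟨fun r s p q hrs hpq a b h => CD.smul_add_tilde_mem_W h hrs hpq,
    fun r s p q hrs hpq a b h => CD.smul_add_tilde_mem_X h hrs hpq,
    fun a b => by simp, fun r s r' s' a => CD.smul_add_tilde_smul_add_tilde a r s r' s', ?_⟩
  rintro r s p q - - a b hab heq
  obtain ⟨ha, hb⟩ : CD.norm a = 1 ∧ CD.norm b = 1 := by
    rcases hab with ⟨⟨-, -, ha, hb, -⟩, -⟩ | ⟨ha, hb, -⟩ <;> exact ⟨ha, hb⟩
  obtain ⟨hr, hs⟩ :=
    CD.smul_add_tilde_eq_self ((CD.norm_eq_one_iff a).1 ha) (congrArg Prod.fst heq)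
  obtain ⟨hp, hq⟩ :=
    CD.smul_add_tilde_eq_self ((CD.norm_eq_one_iff b).1 hb) (congrArg Prod.snd heq)
  exact ⟨hr, hs, hp, hq⟩
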